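/- arXiv:1305.5780 — 3 statements merged into one kernel-verified Lean document; each statement's English description precedes it below -/
import Mathlib

section
/- Let f : ℝ → ℝ be continuous and odd, let F(u) := ∫₀ᵘ f(s) ds, and assume: (i) 0 ≤ F(u) ≤ (1/2) u f(u) for all u ∈ ℝ; (ii) the map t ↦ f(t)/|t| is nondecreasing on (0,∞) and on (−∞,0). Then for every u ∈ ℝ, every r ≥ −1 and every θ ∈ ℝ one has f(u)·[ r(r/2 + 1) u + (1 + r) θ ] + F(u) − F((1 + r)u + θ) ≤ 0. -/
/-!
For `u ≠ 0` write `k = f u / u`, which is `≥ 0` because `0 ≤ F u ≤ u f(u) / 2`, and `v = (1 + r) u + θ`.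
The bracket then equals `k ((v² - u²) / 2 - θ² / 2)`, so it suffices that the line `t ↦ k t`
satisfies `∫ᵤᵛ k t dt ≤ ∫ᵤᵛ f = F v - F u`. Oddness reduces this to `u > 0`, `v ≥ 0`,
where it holds pointwise: `f(t)/t` is nondecreasing, so `f t ≥ k t` beyond `u` and `f t ≤ k t`
below it.
-/

open Set intervalIntegral

variable {f : ℝ → ℝ}

section MonotoneSlope

variable (hf : MonotoneOn (fun t => f t / t) (Ioi 0))
include hf

lemma apply_le_div_mul_of_le {t u : ℝ} (ht : 0 < t) (htu : t ≤ u) : f t ≤ f u / u * t :=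
  calc f t = f t / t * t := (div_mul_cancel₀ _ ht.ne').symm
    _ ≤ f u / u * t := mul_le_mul_of_nonneg_right (hf ht (ht.trans_le htu) htu) ht.le

lemma div_mul_le_apply_of_le {t u : ℝ} (hu : 0 < u) (hut : u ≤ t) : f u / u * t ≤ f t :=
  calc f u / u * t ≤ f t / t * t :=
      mul_le_mul_of_nonneg_right (hf hu (hu.trans_le hut) hut) (hu.le.trans hut)
    _ = f t := div_mul_cancel₀ _ (hu.trans_le hut).ne'

lemma div_mul_sq_sub_sq_le_integral {u v : ℝ} (hfi : IntervalIntegrable f MeasureTheory.volume u v)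
    (hu : 0 < u) (hv : 0 ≤ v) : f u / u * ((v ^ 2 - u ^ 2) / 2) ≤ ∫ t in u..v, f t := by
  have hline : IntervalIntegrable (fun t => f u / u * t) MeasureTheory.volume u v :=
    (continuous_const.mul continuous_id).intervalIntegrable u v
  rw [← integral_id, ← integral_const_mul]
  rcases le_total u v with huv | hvu
  · exact integral_mono_on huv hline hfi fun t ht => div_mul_le_apply_of_le hf hu ht.1
  · rw [integral_symm v u, integral_symm v u, neg_le_neg_iff]
    exact integral_mono_on_of_le_Ioo hvu hfi.symm hline.symm
      fun t ht => apply_le_div_mul_of_le hf (hv.trans_lt ht.1) ht.2.le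

end MonotoneSlope

namespace Function.Odd

variable (hodd : f.Odd)
include hodd

lemma apply_abs_div_abs (u : ℝ) : f |u| / |u| = f u / u := by
  rcases abs_choice u with h | h <;> rw [h]
  rw [hodd u, neg_div_neg_eq]

lemma integral_zero_neg (v : ℝ) : ∫ t in (0 : ℝ)..-v, f t = ∫ t in (0 : ℝ)..v, f t := by
  have h := integral_comp_neg (a := 0) (b := v) f
  simp only [hodd _, integral_neg, neg_zero] at h
  rw [integral_symm 0 (-v)] at h
  linarith

lemma integral_zero_abs (v : ℝ) : ∫ t in (0 : ℝ)..|v|, f t = ∫ t in (0 : ℝ)..v, f t := by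
  rcases abs_choice v with h | h <;> rw [h]
  exact hodd.integral_zero_neg v

lemma integral_abs_abs (hfc : Continuous f) (u v : ℝ) :
    ∫ t in |u|..|v|, f t = ∫ t in u..v, f t := by
  rw [← integral_interval_sub_left (hfc.intervalIntegrable 0 |v|) (hfc.intervalIntegrable 0 |u|),
    hodd.integral_zero_abs, hodd.integral_zero_abs,
    integral_interval_sub_left (hfc.intervalIntegrable 0 v) (hfc.intervalIntegrable 0 u)]

lemma div_mul_sq_sub_sq_le_integral (hfc : Continuous f)
    (hf : MonotoneOn (fun t => f t / t) (Ioi 0)) {u : ℝ} (hu : u ≠ 0) (v : ℝ) :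
    f u / u * ((v ^ 2 - u ^ 2) / 2) ≤ ∫ t in u..v, f t := by
  rw [← hodd.integral_abs_abs hfc, ← hodd.apply_abs_div_abs, ← sq_abs u, ← sq_abs v]
  exact _root_.div_mul_sq_sub_sq_le_integral hf (hfc.intervalIntegrable _ _) (abs_pos.2 hu)
    (abs_nonneg v)

end Function.Odd

theorem pointwise_comparison_inequality_general
    (f : ℝ → ℝ) (hf_cont : Continuous f)
    (hf_odd : ∀ u : ℝ, f (-u) = -f u)
    (F : ℝ → ℝ) (hF : ∀ u : ℝ, F u = ∫ s in (0:ℝ)..u, f s)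
    (hF_nonneg : ∀ u : ℝ, 0 ≤ F u)
    (hF_quad : ∀ u : ℝ, F u ≤ (1 / 2) * (u * f u))
    (hmono_pos : ∀ s t : ℝ, 0 < s → s < t → f s / |s| ≤ f t / |t|) :
    ∀ u r θ : ℝ, -1 ≤ r →
      f u * (r * (r / 2 + 1) * u + (1 + r) * θ) + F u - F ((1 + r) * u + θ) ≤ 0 := by
  intro u r θ _
  set v := (1 + r) * u + θ
  rcases eq_or_ne u 0 with rfl | hu
  · simp [Function.Odd.map_zero hf_odd, hF 0, hF_nonneg]
  have hmono : MonotoneOn (fun t => f t / t) (Ioi 0) :=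
    monotoneOn_iff_forall_lt.2 fun s (hs : 0 < s) t _ hst => by
      simpa only [abs_of_pos hs, abs_of_pos (hs.trans hst)] using hmono_pos s t hs hst
  have hslope : 0 ≤ f u / u := by
    have h := div_nonneg (by linarith [hF_nonneg u, hF_quad u] : 0 ≤ u * f u) (mul_self_nonneg u)
    rwa [mul_div_mul_left _ _ hu] at h
  have hkey := Function.Odd.div_mul_sq_sub_sq_le_integral hf_odd hf_cont hmono hu v
  have hFv : F v - F u = ∫ t in u..v, f t := by
    rw [hF, hF, integral_interval_sub_left (hf_cont.intervalIntegrable _ _)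
      (hf_cont.intervalIntegrable _ _)]
  have hbracket : f u * (r * (r / 2 + 1) * u + (1 + r) * θ) =
      f u / u * ((v ^ 2 - u ^ 2) / 2) - f u / u * (θ ^ 2 / 2) := by
    simp only [v]; field_simp; ring
  nlinarith [mul_nonneg hslope (sq_nonneg θ)]

/-- Pointwise inequality underlying the comparison Lemma 3.5: for `f` continuous,
odd, with `0 ≤ F(u) ≤ ½ u f(u)` and `t ↦ f(t)/|t|` nondecreasing on `(0,∞)` and
on `(−∞,0)`, one has
`f(u)·[r(r/2+1)u + (1+r)θ] + F(u) − F((1+r)u + θ) ≤ 0` for all `u`, `r ≥ −1`, `θ`. -/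
theorem pointwise_comparison_inequality
    (f : ℝ → ℝ) (hf_cont : Continuous f)
    (hf_odd : ∀ u : ℝ, f (-u) = -f u)
    (F : ℝ → ℝ) (hF : ∀ u : ℝ, F u = ∫ s in (0:ℝ)..u, f s)
    (hF_nonneg : ∀ u : ℝ, 0 ≤ F u)
    (hF_quad : ∀ u : ℝ, F u ≤ (1 / 2) * (u * f u))
    (hmono_pos : ∀ s t : ℝ, 0 < s → s < t → f s / |s| ≤ f t / |t|)
    (hmono_neg : ∀ s t : ℝ, s < t → t < 0 → f s / |s| ≤ f t / |t|) :
    ∀ u r θ : ℝ, -1 ≤ r →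
      f u * (r * (r / 2 + 1) * u + (1 + r) * θ) + F u - F ((1 + r) * u + θ) ≤ 0 :=
  pointwise_comparison_inequality_general f hf_cont hf_odd F hF hF_nonneg hF_quad hmono_pos
end

section
/- Let f : ℝ → ℝ be continuous and odd with u f(u) > 0 for all u ≠ 0, let F(u) := ∫₀ᵘ f(s) ds, and assume the map t ↦ f(t)/|t| is strictly increasing on (0,∞) (hence, by oddness and positivity, strictly increasing on all of ℝ∖{0}). Then for every u ≠ 0, every r ≥ −1 and every θ ∈ ℝ with (r, θ) ≠ (0, 0), one has the strict inequality f(u)·[ r(r/2 + 1) u + (1 + r) θ ] + F(u) − F((1 + r)u + θ) < 0. -/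
/-!
Put `c = f(u)/u > 0`, `w = (1 + r)u + θ` and `G(x) = F(x) - c x²/2` (this is
`primitiveSubSq f c`). Completing the square gives
`f(u)·[r(r/2 + 1)u + (1 + r)θ] = c(w² - u²)/2 - cθ²/2`, so the expression equals
`G(u) - G(w) - cθ²/2`. Since `G' = f(x) - c x` and `f(x)/x` is strictly increasing on `(0, ∞)`,
the even function `G` satisfies `G(u) < G(x)` whenever `|x| ≠ |u|`.
Either `θ ≠ 0`, or `θ = 0` and then `|w| = (1 + r)|u| ≠ |u|`; in both cases the expression is `< 0`.
-/

open intervalIntegral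

lemma integral_zero_neg_eq_of_odd {f : ℝ → ℝ} (hf_odd : ∀ u, f (-u) = -f u) (x : ℝ) :
    ∫ s in (0:ℝ)..-x, f s = ∫ s in (0:ℝ)..x, f s := by
  rw [← neg_zero, ← integral_comp_neg, integral_symm]
  simp only [hf_odd, integral_neg, neg_neg, neg_zero]

noncomputable def primitiveSubSq (f : ℝ → ℝ) (c x : ℝ) : ℝ :=
  (∫ s in (0:ℝ)..x, f s) - c * x ^ 2 / 2

namespace primitiveSubSq

variable {f : ℝ → ℝ}

lemma apply_neg_of_odd (hf_odd : ∀ u, f (-u) = -f u) (c x : ℝ) :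
    primitiveSubSq f c (-x) = primitiveSubSq f c x := by
  simp only [primitiveSubSq, integral_zero_neg_eq_of_odd hf_odd, neg_sq]

lemma apply_abs_of_odd (hf_odd : ∀ u, f (-u) = -f u) (c x : ℝ) :
    primitiveSubSq f c |x| = primitiveSubSq f c x := by
  rcases abs_choice x with h | h <;> rw [h]
  exact apply_neg_of_odd hf_odd c x

lemma hasDerivAt (hf : Continuous f) (c x : ℝ) :
    HasDerivAt (primitiveSubSq f c) (f x - c * x) x := by
  have hF : HasDerivAt (fun x => ∫ s in (0:ℝ)..x, f s) (f x) x :=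
    integral_hasDerivAt_right (hf.intervalIntegrable _ _) (hf.stronglyMeasurableAtFilter _ _)
      hf.continuousAt
  have hsq : HasDerivAt (fun x : ℝ => c * x ^ 2 / 2) (c * x) x :=
    (((hasDerivAt_pow 2 x).const_mul c).div_const 2).congr_deriv (by norm_num; ring)
  exact hF.sub hsq

lemma continuous (hf : Continuous f) (c : ℝ) : Continuous (primitiveSubSq f c) :=
  continuous_iff_continuousAt.mpr fun x => (hasDerivAt hf c x).continuousAt

lemma self_lt_of_nonneg_of_ne (hf : Continuous f)
    (hmono : ∀ s t : ℝ, 0 < s → s < t → f s / |s| < f t / |t|)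
    {a x : ℝ} (ha : 0 < a) (hx : 0 ≤ x) (hxa : x ≠ a) :
    primitiveSubSq f (f a / a) a < primitiveSubSq f (f a / a) x := by
  have hderiv y := (hasDerivAt hf (f a / a) y).deriv
  rcases hxa.lt_or_gt with hlt | hgt
  · refine strictAntiOn_of_deriv_neg (convex_Icc 0 a) (continuous hf _).continuousOn ?_
      ⟨hx, hlt.le⟩ ⟨ha.le, le_rfl⟩ hlt
    intro y hy
    rw [interior_Icc] at hy
    obtain ⟨hy, hya⟩ := hy
    have hslope := hmono y a hy hya
    rw [abs_of_pos hy, abs_of_pos ha, div_lt_iff₀ hy] at hslope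
    rwa [hderiv, sub_neg]
  · refine strictMonoOn_of_deriv_pos (convex_Ici a) (continuous hf _).continuousOn ?_
      Set.self_mem_Ici (Set.mem_Ici.mpr hgt.le) hgt
    intro y hy
    rw [interior_Ici] at hy
    have hy0 : 0 < y := ha.trans hy
    have hslope := hmono a y ha hy
    rw [abs_of_pos hy0, abs_of_pos ha, lt_div_iff₀ hy0] at hslope
    rwa [hderiv, sub_pos]

variable (hf : Continuous f) (hf_odd : ∀ u, f (-u) = -f u)
  (hmono : ∀ s t : ℝ, 0 < s → s < t → f s / |s| < f t / |t|)
include hf hf_odd hmono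

lemma self_lt_of_abs_ne {a x : ℝ} (ha : a ≠ 0) (hxa : |x| ≠ |a|) :
    primitiveSubSq f (f a / a) a < primitiveSubSq f (f a / a) x := by
  have hc : f |a| / |a| = f a / a := by
    rcases abs_choice a with h | h <;> rw [h]
    rw [hf_odd, neg_div_neg_eq]
  rw [← apply_abs_of_odd hf_odd _ a, ← apply_abs_of_odd hf_odd _ x, ← hc]
  exact self_lt_of_nonneg_of_ne hf hmono (abs_pos.mpr ha) (abs_nonneg x) hxa

lemma self_le {a : ℝ} (ha : a ≠ 0) (x : ℝ) :
    primitiveSubSq f (f a / a) a ≤ primitiveSubSq f (f a / a) x := by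
  rcases eq_or_ne |x| |a| with h | h
  · rw [← apply_abs_of_odd hf_odd _ a, ← apply_abs_of_odd hf_odd _ x, h]
  · exact (self_lt_of_abs_ne hf hf_odd hmono ha h).le

end primitiveSubSq

/-- Strict pointwise inequality (Lemma 2.2 of Szulkin–Weth): for `f` continuous,
odd, with `u f(u) > 0` for `u ≠ 0` and `t ↦ f(t)/|t|` strictly increasing on
`(0,∞)`, one has
`f(u)·[r(r/2+1)u + (1+r)θ] + F(u) − F((1+r)u + θ) < 0`
for all `u ≠ 0`, `r ≥ −1`, `θ` with `(r,θ) ≠ (0,0)`. -/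
theorem pointwise_comparison_inequality_strict
    (f : ℝ → ℝ) (hf_cont : Continuous f)
    (hf_odd : ∀ u : ℝ, f (-u) = -f u)
    (hf_pos : ∀ u : ℝ, u ≠ 0 → 0 < u * f u)
    (F : ℝ → ℝ) (hF : ∀ u : ℝ, F u = ∫ s in (0:ℝ)..u, f s)
    (hmono : ∀ s t : ℝ, 0 < s → s < t → f s / |s| < f t / |t|) :
    ∀ u r θ : ℝ, u ≠ 0 → -1 ≤ r → (r, θ) ≠ (0, 0) →
      f u * (r * (r / 2 + 1) * u + (1 + r) * θ) + F u - F ((1 + r) * u + θ) < 0 := by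
  intro u r θ hu hr hrθ
  have hc : 0 < f u / u := by
    have := hf_pos u hu
    rw [← mul_div_mul_left (f u) u hu, ← sq]
    positivity
  set c := f u / u
  have hexpand : f u * (r * (r / 2 + 1) * u + (1 + r) * θ) + F u - F ((1 + r) * u + θ)
      = primitiveSubSq f c u - primitiveSubSq f c ((1 + r) * u + θ) - c * θ ^ 2 / 2 := by
    simp only [primitiveSubSq, hF, c]
    field_simp
    ring
  rw [hexpand]
  rcases eq_or_ne θ 0 with rfl | hθ
  · have hr0 : r ≠ 0 := by rintro rfl; exact hrθ rfl
    have hw : |(1 + r) * u + 0| ≠ |u| := by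
      rw [add_zero, abs_mul, abs_of_nonneg (by linarith : 0 ≤ 1 + r)]
      intro h
      have := abs_pos.mpr hu
      exact hr0 (by nlinarith)
    have := primitiveSubSq.self_lt_of_abs_ne hf_cont hf_odd hmono hu hw
    linarith
  · have := primitiveSubSq.self_le hf_cont hf_odd hmono hu ((1 + r) * u + θ)
    have : 0 < c * θ ^ 2 / 2 := by positivity
    linarith
end

section
/- Let X be a separable real Hilbert space, Y a closed subspace, Z = Y^⊥, and P : X → Y, Q : X → Z the orthogonal projections. Fix an orthonormal basis (a_j)_{j≥0} of Y and define the τ-norm ⦀u⦀ := max( Σ_{j≥0} 2^{-(j+1)} |⟨Pu, a_j⟩| , ‖Qu‖ ). Let (u_n) ⊂ X be a bounded sequence and u ∈ X. Then ⦀u_n − u⦀ → 0 if and only if P u_n ⇀ P u weakly in X and Q u_n → Q u in norm. -/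
open Filter Topology
open scoped RealInnerProductSpace

/-!
The τ-norm is the maximum of two nonnegative quantities, so it tends to `0` iff both do. Since
`P` is self-adjoint and fixes every `a j`, `⟪P w, a j⟫ = ⟪w, a j⟫`, and for a bounded sequence
the weighted sum `∑ 2^{-(j+1)} |⟪w n, a j⟫|` tends to `0` iff every coordinate does (one term is
dominated by the sum; conversely, dominated convergence). Finally, for a bounded sequence the
functionals `⟪w n, ·⟫` are equicontinuous, so convergence on the `a j` extends to the closure
`Y` of their span, which is weak convergence of `P w n`.
-/

section

variable {α ι : Type*} {l : Filter α}

theorem tendsto_max_nhds_zero_iff {f g : α → ℝ} (hf : ∀ n, 0 ≤ f n) (hg : ∀ n, 0 ≤ g n) :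
    Tendsto (fun n => max (f n) (g n)) l (𝓝 0) ↔ Tendsto f l (𝓝 0) ∧ Tendsto g l (𝓝 0) :=
  ⟨fun h => ⟨squeeze_zero hf (fun _ => le_max_left _ _) h,
      squeeze_zero hg (fun _ => le_max_right _ _) h⟩,
    fun ⟨hf, hg⟩ => by simpa using hf.max hg⟩

theorem tendsto_tsum_mul_abs_nhds_zero_iff {c : ι → ℝ} (hc_pos : ∀ j, 0 < c j) (hc : Summable c)
    {f : α → ι → ℝ} {C : ℝ} (hf : ∀ n j, |f n j| ≤ C) :
    Tendsto (fun n => ∑' j, c j * |f n j|) l (𝓝 0) ↔ ∀ j, Tendsto (f · j) l (𝓝 0) := by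
  have hdom : ∀ n j, ‖c j * |f n j|‖ ≤ c j * C := fun n j => by
    rw [Real.norm_of_nonneg (by have := hc_pos j; positivity)]
    exact mul_le_mul_of_nonneg_left (hf n j) (hc_pos j).le
  constructor
  · intro h j
    have hterm : ∀ n, c j * |f n j| ≤ ∑' i, c i * |f n i| := fun n =>
      (hc.mul_right C).of_norm_bounded (hdom n) |>.le_tsum j fun i _ => by
        have := hc_pos i; positivity
    rw [tendsto_zero_iff_abs_tendsto_zero]
    refine squeeze_zero (fun _ => abs_nonneg _) (fun n => ?_) ((h.div_const (c j)).trans ?_)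
    · rw [le_div_iff₀ (hc_pos j), mul_comm]; exact hterm n
    · simp
  · intro h
    simpa only [tsum_zero] using tendsto_tsum_of_dominated_convergence (g := fun _ => 0)
      (hc.mul_right C) (fun j => by simpa using (h j).abs.const_mul (c j))
      (Eventually.of_forall hdom)

end

section

variable {E ι : Type*} [SeminormedAddCommGroup E] [InnerProductSpace ℝ E] {l : Filter ι}

theorem tendsto_inner_nhds_zero_of_mem_closure_span {w : ι → E} {C : ℝ} (hw : ∀ n, ‖w n‖ ≤ C)
    {s : Set E} (hs : ∀ y ∈ s, Tendsto (fun n => ⟪w n, y⟫) l (𝓝 0)) {y : E}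
    (hy : y ∈ (Submodule.span ℝ s).topologicalClosure) :
    Tendsto (fun n => ⟪w n, y⟫) l (𝓝 0) := by
  let K : Submodule ℝ E :=
    { carrier := {y | Tendsto (fun n => ⟪w n, y⟫) l (𝓝 0)}
      add_mem' := fun hx hy => by simpa [inner_add_right] using hx.add hy
      zero_mem' := by simpa using tendsto_const_nhds
      smul_mem' := fun c x hx => by simpa [real_inner_smul_right] using hx.const_mul c }
  have hequi : Equicontinuous fun n => (innerSL ℝ (w n) : E → ℝ) :=
    ((NormedSpace.equicontinuous_TFAE fun n => innerSL ℝ (w n)).out 5 1).mp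
      (show ∃ C, ∀ n, ‖innerSL ℝ (w n)‖ ≤ C from ⟨C, fun n => by simpa using hw n⟩)
  have hK : IsClosed (K : Set E) := hequi.isClosed_setOfPred_tendsto continuous_const
  exact Submodule.topologicalClosure_minimal _ ((Submodule.span_le (p := K)).mpr hs) hK hy

end

theorem Submodule.tendsto_inner_starProjection_nhds_zero_iff {E ι : Type*}
    [NormedAddCommGroup E] [InnerProductSpace ℝ E] {l : Filter ι}
    (K : Submodule ℝ E) [K.HasOrthogonalProjection] (x : ι → E) :
    (∀ h, Tendsto (fun n => ⟪K.starProjection (x n), h⟫) l (𝓝 0)) ↔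
      ∀ y ∈ K, Tendsto (fun n => ⟪x n, y⟫) l (𝓝 0) := by
  simp only [K.inner_starProjection_left_eq_right]
  exact ⟨fun h y hy => by simpa [K.starProjection_eq_self_iff.mpr hy] using h y,
    fun h z => h _ (K.starProjection_apply_mem z)⟩

theorem summable_one_div_two_pow_succ : Summable fun j : ℕ => (1 / 2 ^ (j + 1) : ℝ) :=
  ((summable_nat_add_iff 1).mpr summable_geometric_two).congr fun j => one_div_pow 2 (j + 1)

theorem tau_norm_convergence_iff_general
    {X : Type*} [NormedAddCommGroup X] [InnerProductSpace ℝ X]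
    (Y : Submodule ℝ X) [CompleteSpace Y]
    (P Q : X → X)
    (hP : ∀ u, P u = (Y.orthogonalProjection u : X))
    (hQ : ∀ u, Q u = (Yᗮ.orthogonalProjection u : X))
    (a : ℕ → X) (ha_mem : ∀ j, a j ∈ Y) (ha_on : Orthonormal ℝ a)
    (ha_span : (Submodule.span ℝ (Set.range a)).topologicalClosure = Y)
    (T : X → ℝ)
    (hT : ∀ u, T u = max (∑' j : ℕ, (1 / 2 ^ (j + 1) : ℝ) * |⟪P u, a j⟫|) ‖Q u‖)
    (u : ℕ → X) (hu_bdd : ∃ M : ℝ, ∀ n, ‖u n‖ ≤ M) (v : X) :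
    Tendsto (fun n => T (u n - v)) atTop (nhds 0) ↔
      ((∀ h : X, Tendsto (fun n => ⟪P (u n), h⟫) atTop (nhds ⟪P v, h⟫)) ∧
        Tendsto (fun n => ‖Q (u n) - Q v‖) atTop (nhds 0)) := by
  obtain ⟨M, hM⟩ := hu_bdd
  have hP' : ∀ x, P x = Y.starProjection x := hP
  have hPa : ∀ x j, ⟪P x, a j⟫ = ⟪x, a j⟫ := fun x j => by
    rw [hP', Y.inner_starProjection_left_eq_right, Y.starProjection_eq_self_iff.mpr (ha_mem j)]
  have hbdd : ∀ n, ‖u n - v‖ ≤ M + ‖v‖ := fun n => (norm_sub_le _ _).trans (by linarith [hM n])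
  have hcoord_bdd : ∀ n j, |⟪u n - v, a j⟫| ≤ M + ‖v‖ := fun n j =>
    (abs_real_inner_le_norm _ _).trans (by rw [ha_on.1 j, mul_one]; exact hbdd n)
  have hweak : (∀ h, Tendsto (fun n => ⟪P (u n), h⟫) atTop (𝓝 ⟪P v, h⟫)) ↔
      ∀ j, Tendsto (fun n => ⟪u n - v, a j⟫) atTop (𝓝 0) := by
    have hshift : ∀ h, Tendsto (fun n => ⟪P (u n), h⟫) atTop (𝓝 ⟪P v, h⟫) ↔
        Tendsto (fun n => ⟪Y.starProjection (u n - v), h⟫) atTop (𝓝 0) := fun h => by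
      rw [← tendsto_sub_nhds_zero_iff]
      simp only [hP', map_sub, inner_sub_left]
    rw [forall_congr' hshift, Y.tendsto_inner_starProjection_nhds_zero_iff]
    refine ⟨fun h j => h _ (ha_mem j), fun h y hy => ?_⟩
    exact tendsto_inner_nhds_zero_of_mem_closure_span hbdd (by simpa using h) (ha_span ▸ hy)
  have hQ' : ∀ n, Q (u n - v) = Q (u n) - Q v := fun n => by simp [hQ, map_sub]
  simp only [hT, hPa, hQ']
  rw [tendsto_max_nhds_zero_iff (fun n => by positivity) (fun n => norm_nonneg _),
    tendsto_tsum_mul_abs_nhds_zero_iff (fun j => by positivity) summable_one_div_two_pow_succ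
      hcoord_bdd, hweak]

/-- Property of the Kryszewski–Szulkin τ-norm: for a bounded sequence `(u_n)`,
`⦀u_n − u⦀ → 0` iff `P u_n ⇀ P u` weakly and `Q u_n → Q u` in norm. -/
theorem tau_norm_convergence_iff
    {X : Type*} [NormedAddCommGroup X] [InnerProductSpace ℝ X] [CompleteSpace X]
    [TopologicalSpace.SeparableSpace X]
    (Y : Submodule ℝ X) [CompleteSpace Y]
    (P Q : X → X)
    (hP : ∀ u, P u = (Y.orthogonalProjection u : X))
    (hQ : ∀ u, Q u = (Yᗮ.orthogonalProjection u : X))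
    (a : ℕ → X) (ha_mem : ∀ j, a j ∈ Y) (ha_on : Orthonormal ℝ a)
    (ha_span : (Submodule.span ℝ (Set.range a)).topologicalClosure = Y)
    (T : X → ℝ)
    (hT : ∀ u, T u = max (∑' j : ℕ, (1 / 2 ^ (j + 1) : ℝ) * |⟪P u, a j⟫|) ‖Q u‖)
    (u : ℕ → X) (hu_bdd : ∃ M : ℝ, ∀ n, ‖u n‖ ≤ M) (v : X) :
    Tendsto (fun n => T (u n - v)) atTop (nhds 0) ↔
      ((∀ h : X, Tendsto (fun n => ⟪P (u n), h⟫) atTop (nhds ⟪P v, h⟫)) ∧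
        Tendsto (fun n => ‖Q (u n) - Q v‖) atTop (nhds 0)) :=
  tau_norm_convergence_iff_general Y P Q hP hQ a ha_mem ha_on ha_span T hT u hu_bdd v
end
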